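/- arXiv:0807.3310 — 2 statements merged into one kernel-verified Lean document; each statement's English description precedes it below -/
import Mathlib

section
/- Every m×m paraunitary polynomial matrix-function A(z) = Σ_{k=0}^{g-1} A_k z^k of degree d (i.e., det A(z) = c·z^d) with A_{g-1} ≠ 0 can be factored as A(z) = V_1(z)·V_2(z)···V_d(z)·U, where each V_j(z) = I − v_j v_j* + v_j v_j* z is a primitive paraunitary matrix-function determined by a unit vector v_j ∈ ℂ^m, and U is a constant unitary matrix. -/
open Matrix Finset

/-- Evaluation of a Laurent polynomial matrix `A(z) = ∑ₖ Aₖ zᵏ` at `z`. -/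
noncomputable def mEval {m : ℕ} (A : ℤ → Matrix (Fin m) (Fin m) ℂ) (z : ℂ) :
    Matrix (Fin m) (Fin m) ℂ :=
  ∑ᶠ k : ℤ, z ^ k • A k

/-- Evaluation of the coefficient-wise adjoint `A*(1/z) = ∑ₖ Aₖ* z⁻ᵏ` at `z`. -/
noncomputable def mAdjEval {m : ℕ} (A : ℤ → Matrix (Fin m) (Fin m) ℂ) (z : ℂ) :
    Matrix (Fin m) (Fin m) ℂ :=
  ∑ᶠ k : ℤ, z ^ (-k) • (A k)ᴴ

/-- The primitive matrix-function `V(z) = I − v v* + v v* z`. -/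
noncomputable def primitiveMF {m : ℕ} (v : Fin m → ℂ) (z : ℂ) :
    Matrix (Fin m) (Fin m) ℂ :=
  1 - vecMulVec v (star v) + z • vecMulVec v (star v)

variable {m : ℕ}

lemma mEval_eq_sum (A : ℤ → Matrix (Fin m) (Fin m) ℂ) {s : Finset ℤ}
    (h : ∀ k ∉ s, A k = 0) (z : ℂ) : mEval A z = ∑ k ∈ s, z ^ k • A k := by
  refine finsum_eq_finset_sum_of_support_subset _ ?_
  intro k hk
  simp only [Function.mem_support] at hk
  by_contra hks
  exact hk (by rw [h k hks, smul_zero])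

lemma mAdjEval_eq_sum (A : ℤ → Matrix (Fin m) (Fin m) ℂ) {s : Finset ℤ}
    (h : ∀ k ∉ s, A k = 0) (z : ℂ) : mAdjEval A z = ∑ k ∈ s, z ^ (-k) • (A k)ᴴ := by
  refine finsum_eq_finset_sum_of_support_subset _ ?_
  intro k hk
  simp only [Function.mem_support] at hk
  by_contra hks
  exact hk (by rw [h k hks, conjTranspose_zero, smul_zero])

lemma extract_scalar {a b : ℤ} (f : ℤ → ℂ)
    (h : ∀ z : ℂ, z ≠ 0 → ∑ n ∈ Finset.Icc a b, z ^ n * f n = 0) :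
    ∀ n ∈ Finset.Icc a b, f n = 0 := by
  intro n hn
  obtain ⟨han, hnb⟩ := Finset.mem_Icc.mp hn
  set N : ℕ := (b - a).toNat + 1 with hN
  set p : Polynomial ℂ := ∑ j ∈ Finset.range N, Polynomial.C (f (a + j)) * Polynomial.X ^ j with hp
  have keysum : ∀ z : ℂ, z ≠ 0 →
      ∑ n ∈ Finset.Icc a b, z ^ n * f n = z ^ a * Polynomial.eval z p := by
    intro z hz
    rw [hp, Polynomial.eval_finset_sum, Finset.mul_sum]
    refine Finset.sum_nbij' (i := fun n : ℤ => (n - a).toNat) (j := fun j : ℕ => a + (j : ℤ))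
      ?_ ?_ ?_ ?_ ?_
    · intro x hx
      obtain ⟨h1, h2⟩ := Finset.mem_Icc.mp hx
      simp only [Finset.mem_range, hN]
      omega
    · intro j hj
      simp only [Finset.mem_range, hN] at hj
      refine Finset.mem_Icc.mpr ⟨by omega, by omega⟩
    · intro x hx
      obtain ⟨h1, h2⟩ := Finset.mem_Icc.mp hx
      omega
    · intro j hj
      omega
    · intro x hx
      obtain ⟨h1, h2⟩ := Finset.mem_Icc.mp hx
      simp only [Polynomial.eval_mul, Polynomial.eval_C, Polynomial.eval_pow, Polynomial.eval_X]
      have hx' : a + ((x - a).toNat : ℤ) = x := by omega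
      have hzz : z ^ x = z ^ a * z ^ ((x - a).toNat) := by
        rw [← zpow_natCast z ((x - a).toNat), ← zpow_add₀ hz, hx']
      rw [hx', hzz]
      ring
  have hp0 : p = 0 := by
    apply Polynomial.eq_zero_of_infinite_isRoot
    apply Set.Infinite.mono (s := {z : ℂ | z ≠ 0})
    · intro z hz
      have := keysum z hz
      have h2 := h z hz
      rw [this] at h2
      simp only [Set.mem_setOf_eq, Polynomial.IsRoot]
      rcases mul_eq_zero.mp h2 with h3 | h3
      · exact absurd h3 (zpow_ne_zero _ hz)
      · exact h3
    · exact Set.Finite.infinite_compl (Set.finite_singleton (0 : ℂ))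
  have hcoeff : f (a + ((n - a).toNat : ℤ)) = 0 := by
    have := congrArg (fun q => Polynomial.coeff q ((n - a).toNat)) hp0
    simp only [hp, Polynomial.finset_sum_coeff, Polynomial.coeff_C_mul, Polynomial.coeff_X_pow,
      Polynomial.coeff_zero] at this
    rw [Finset.sum_eq_single ((n - a).toNat)] at this
    · simpa using this
    · intro j hj hne
      simp [hne.symm]
    · intro hnotin
      exfalso
      apply hnotin
      simp only [Finset.mem_range, hN]
      omega
  have : a + ((n - a).toNat : ℤ) = n := by omega
  rwa [this] at hcoeff

lemma extract_matrix {a b : ℤ} (M : ℤ → Matrix (Fin m) (Fin m) ℂ)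
    (h : ∀ z : ℂ, z ≠ 0 → ∑ n ∈ Finset.Icc a b, z ^ n • M n = 0) :
    ∀ n ∈ Finset.Icc a b, M n = 0 := by
  intro n hn
  ext i j
  have key : ∀ z : ℂ, z ≠ 0 → ∑ n ∈ Finset.Icc a b, z ^ n * M n i j = 0 := by
    intro z hz
    have h2 := congrFun (congrFun (h z hz) i) j
    simpa [Finset.sum_apply, Matrix.sum_apply, Matrix.smul_apply, smul_eq_mul] using h2
  have := extract_scalar (fun k => M k i j) key n hn
  simpa using this

lemma conv_eq (A : ℤ → Matrix (Fin m) (Fin m) ℂ) {G : ℤ} (hG : 0 ≤ G)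
    (hsupp : ∀ k : ℤ, k ∉ Finset.Icc 0 G → A k = 0) (z : ℂ) (hz : z ≠ 0) :
    mEval A z * mAdjEval A z =
      ∑ n ∈ Finset.Icc (-G) G, z ^ n • (∑ l ∈ Finset.Icc 0 G, A (l + n) * (A l)ᴴ) := by
  rw [mEval_eq_sum A hsupp z, mAdjEval_eq_sum A hsupp z, Finset.sum_mul_sum, Finset.sum_comm]
  have step : ∀ l ∈ Finset.Icc (0:ℤ) G,
      ∑ k ∈ Finset.Icc (0:ℤ) G, (z ^ k • A k) * (z ^ (-l) • (A l)ᴴ)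
      = ∑ n ∈ Finset.Icc (-G) G, z ^ n • (A (l + n) * (A l)ᴴ) := by
    intro l hl
    obtain ⟨hl0, hlG⟩ := Finset.mem_Icc.mp hl
    have e1 : ∀ k : ℤ, (z ^ k • A k) * (z ^ (-l) • (A l)ᴴ)
        = z ^ (k - l) • (A k * (A l)ᴴ) := by
      intro k
      rw [smul_mul_assoc, mul_smul_comm, smul_smul, ← zpow_add₀ hz, ← sub_eq_add_neg]
    simp_rw [e1]
    have e2 : ∑ k ∈ Finset.Icc (0:ℤ) G, z ^ (k - l) • (A k * (A l)ᴴ)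
        = ∑ n ∈ Finset.Icc (0 + -l) (G + -l), z ^ n • (A (l + n) * (A l)ᴴ) := by
      rw [← Finset.map_add_right_Icc, Finset.sum_map]
      refine Finset.sum_congr rfl fun k hk => ?_
      simp only [addRightEmbedding_apply]
      have h2 : l + (k + -l) = k := by ring
      rw [h2]
      have h1 : k + -l = k - l := by ring
      rw [h1]
    rw [e2]
    refine Finset.sum_subset ?_ ?_
    · intro x hx
      obtain ⟨h1, h2⟩ := Finset.mem_Icc.mp hx
      exact Finset.mem_Icc.mpr ⟨by omega, by omega⟩
    · intro x hx hx'
      have : A (l + x) = 0 := by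
        apply hsupp
        intro hmem
        obtain ⟨h1, h2⟩ := Finset.mem_Icc.mp hmem
        exact hx' (Finset.mem_Icc.mpr ⟨by omega, by omega⟩)
      rw [this, Matrix.zero_mul, smul_zero]
  rw [Finset.sum_congr rfl step, Finset.sum_comm]
  refine Finset.sum_congr rfl fun n _ => ?_
  rw [Finset.smul_sum]

lemma coeff_ids (A : ℤ → Matrix (Fin m) (Fin m) ℂ) {G : ℤ} (hG : 0 ≤ G)
    (hsupp : ∀ k : ℤ, k ∉ Finset.Icc 0 G → A k = 0)
    (hpara : ∀ z : ℂ, z ≠ 0 → mEval A z * mAdjEval A z = 1) :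
    ∀ n ∈ Finset.Icc (-G) G, n ≠ 0 →
      (∑ l ∈ Finset.Icc (0:ℤ) G, A (l + n) * (A l)ᴴ) = 0 := by
  set C : ℤ → Matrix (Fin m) (Fin m) ℂ :=
    fun n => ∑ l ∈ Finset.Icc (0:ℤ) G, A (l + n) * (A l)ᴴ with hC
  set D : ℤ → Matrix (Fin m) (Fin m) ℂ :=
    fun n => C n - (if n = 0 then (1 : Matrix (Fin m) (Fin m) ℂ) else 0) with hD
  have hDsum : ∀ z : ℂ, z ≠ 0 → ∑ n ∈ Finset.Icc (-G) G, z ^ n • D n = 0 := by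
    intro z hz
    have h1 : ∑ n ∈ Finset.Icc (-G) G, z ^ n • C n = 1 := by
      rw [← conv_eq A hG hsupp z hz]; exact hpara z hz
    have h2 : ∑ n ∈ Finset.Icc (-G) G,
        z ^ n • (if n = 0 then (1 : Matrix (Fin m) (Fin m) ℂ) else 0) = 1 := by
      rw [Finset.sum_eq_single_of_mem 0 (Finset.mem_Icc.mpr ⟨by omega, hG⟩)]
      · simp
      · intro k _ hk0
        simp [hk0]
    simp only [hD, smul_sub]
    rw [Finset.sum_sub_distrib, h1, h2, sub_self]
  intro n hn hn0
  have := extract_matrix D hDsum n hn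
  simpa [hD, hn0] using this

lemma eval_at_zero (A : ℤ → Matrix (Fin m) (Fin m) ℂ) {G : ℤ} (hG : 0 ≤ G)
    (hsupp : ∀ k : ℤ, k ∉ Finset.Icc 0 G → A k = 0)
    {c : ℂ} {d : ℕ} (hdet : ∀ z : ℂ, z ≠ 0 → (mEval A z).det = c * z ^ d) :
    (A 0).det = c * 0 ^ d := by
  set f : ℂ → Matrix (Fin m) (Fin m) ℂ := fun z => ∑ k ∈ Finset.Icc (0:ℤ) G, z ^ (k.toNat) • A k
    with hfdef
  have hf : ∀ z : ℂ, mEval A z = f z := by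
    intro z
    rw [mEval_eq_sum A hsupp z]
    refine Finset.sum_congr rfl fun k hk => ?_
    have h1 : ((k.toNat : ℕ) : ℤ) = k := Int.toNat_of_nonneg (Finset.mem_Icc.mp hk).1
    have h2 := zpow_natCast z k.toNat
    rw [h1] at h2
    rw [h2]
  have hcont : Continuous fun z => (f z).det := by
    apply Continuous.matrix_det
    apply continuous_finset_sum
    intro k _
    exact (continuous_pow _).smul continuous_const
  have h0 : f 0 = A 0 := by
    show ∑ k ∈ Finset.Icc (0:ℤ) G, (0:ℂ) ^ (k.toNat) • A k = A 0
    rw [Finset.sum_eq_single_of_mem 0 (Finset.mem_Icc.mpr ⟨le_refl 0, hG⟩)]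
    · simp
    · intro k hk hk0
      have hk' := (Finset.mem_Icc.mp hk).1
      have : 0 < k.toNat := by omega
      rw [zero_pow (by omega), zero_smul]
  have t1 : Filter.Tendsto (fun z => (f z).det) (nhdsWithin (0:ℂ) {(0:ℂ)}ᶜ) (nhds ((A 0).det)) := by
    rw [← h0]
    exact (hcont.tendsto 0).mono_left nhdsWithin_le_nhds
  have t2 : Filter.Tendsto (fun z : ℂ => c * z ^ d) (nhdsWithin (0:ℂ) {(0:ℂ)}ᶜ)
      (nhds (c * 0 ^ d)) :=
    ((continuous_const.mul (continuous_pow d)).tendsto 0).mono_left nhdsWithin_le_nhds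
  have heq : (fun z => (f z).det) =ᶠ[nhdsWithin (0:ℂ) {(0:ℂ)}ᶜ] fun z => c * z ^ d := by
    filter_upwards [self_mem_nhdsWithin] with z hz
    rw [← hf z]
    exact hdet z hz
  exact tendsto_nhds_unique (t1.congr' heq) t2

lemma exists_unit_nullvec (M : Matrix (Fin m) (Fin m) ℂ) (hdet : M.det = 0) :
    ∃ u : Fin m → ℂ, star u ⬝ᵥ u = 1 ∧ M *ᵥ u = 0 := by
  obtain ⟨v, hv0, hvM⟩ := (Matrix.exists_mulVec_eq_zero_iff).mpr hdet
  set S : ℝ := ∑ i, Complex.normSq (v i) with hS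
  have hdotv : star v ⬝ᵥ v = (S : ℂ) := by
    rw [hS]
    push_cast
    refine Finset.sum_congr rfl fun i _ => ?_
    simp [Pi.star_apply, Complex.normSq_eq_conj_mul_self]
  have hSpos : 0 < S := by
    obtain ⟨i, hi⟩ := Function.ne_iff.mp hv0
    refine Finset.sum_pos' (fun j _ => Complex.normSq_nonneg _) ⟨i, Finset.mem_univ i, ?_⟩
    simpa [Complex.normSq_pos] using hi
  set r : ℝ := Real.sqrt S with hr
  have hrpos : 0 < r := Real.sqrt_pos.mpr hSpos
  have hrne : ((r : ℂ)) ≠ 0 := by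
    simpa using ne_of_gt hrpos
  refine ⟨(r : ℂ)⁻¹ • v, ?_, ?_⟩
  · have hstar : star ((r : ℂ)⁻¹ • v) = (r : ℂ)⁻¹ • star v := by
      ext i
      simp [Pi.star_apply, Complex.ext_iff, Complex.conj_ofReal]
    rw [hstar, smul_dotProduct, dotProduct_smul, hdotv, smul_eq_mul, smul_eq_mul]
    rw [← mul_assoc, ← mul_inv]
    have : (r : ℂ) * r = (S : ℂ) := by
      push_cast
      norm_cast
      exact_mod_cast congrArg (fun x : ℝ => (x : ℂ)) (Real.mul_self_sqrt hSpos.le)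
    rw [this]
    exact inv_mul_cancel₀ (by exact_mod_cast ne_of_gt hSpos)
  · rw [Matrix.mulVec_smul, hvM, smul_zero]

lemma proj_idem {u : Fin m → ℂ} (huu : star u ⬝ᵥ u = 1) :
    vecMulVec u (star u) * vecMulVec u (star u) = vecMulVec u (star u) := by
  ext i j
  simp only [Matrix.mul_apply, Matrix.vecMulVec_apply, Pi.star_apply]
  have : ∑ k, u i * star (u k) * (u k * star (u j))
      = (u i * star (u j)) * ∑ k, star (u k) * u k := by
    rw [Finset.mul_sum]
    exact Finset.sum_congr rfl fun k _ => by ring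
  rw [this]
  have h2 : ∑ k, star (u k) * u k = 1 := huu
  rw [h2, mul_one]

lemma proj_herm (u : Fin m → ℂ) :
    (vecMulVec u (star u))ᴴ = vecMulVec u (star u) := by
  ext i j
  simp only [Matrix.conjTranspose_apply, Matrix.vecMulVec_apply, Pi.star_apply,
    StarMul.star_mul, star_star]
  try ring

lemma proj_null {u : Fin m → ℂ} {M : Matrix (Fin m) (Fin m) ℂ} (h : Mᴴ *ᵥ u = 0) :
    vecMulVec u (star u) * M = 0 := by
  ext i j
  simp only [Matrix.mul_apply, Matrix.vecMulVec_apply, Pi.star_apply, Matrix.zero_apply]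
  have h1 : ∑ k, star (u k) * M k j = 0 := by
    have h2 := congrFun h j
    simp only [Matrix.mulVec, dotProduct, Matrix.conjTranspose_apply, Pi.zero_apply] at h2
    have h3 := congrArg (starRingEnd ℂ) h2
    simp only [map_sum, _root_.map_mul, map_zero, RingHomCompTriple.comp_apply,
      Complex.conj_conj] at h3
    rw [← h3]
    refine Finset.sum_congr rfl fun k _ => ?_
    simp [Complex.star_def, mul_comm]
  calc ∑ k, u i * star (u k) * M k j = u i * ∑ k, star (u k) * M k j := by
        rw [Finset.mul_sum]; exact Finset.sum_congr rfl fun k _ => by ring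
    _ = 0 := by rw [h1, mul_zero]

lemma det_one_add_smul_proj {u : Fin m → ℂ} (huu : star u ⬝ᵥ u = 1) (t : ℂ) :
    (1 + t • vecMulVec u (star u)).det = 1 + t := by
  have h1 : t • vecMulVec u (star u) = vecMulVec (t • u) (star u) := by
    ext i j
    simp [Matrix.vecMulVec_apply, mul_assoc]
  rw [h1, Matrix.vecMulVec_eq (Fin 1), Matrix.det_one_add_replicateCol_mul_replicateRow]
  rw [dotProduct_smul, huu, smul_eq_mul, mul_one]

lemma vw_mul {P : Matrix (Fin m) (Fin m) ℂ} (hP2 : P * P = P) {z : ℂ} (hz : z ≠ 0) :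
    (1 - P + z • P) * (1 - P + z⁻¹ • P) = 1 := by
  have q1 : (1 - P) * (1 - P) = 1 - P := by
    have : (1 - P) * (1 - P) = 1 - P - P + P * P := by noncomm_ring
    rw [this, hP2]; abel
  have q2 : P * (1 - P) = 0 := by
    have : P * (1 - P) = P - P * P := by noncomm_ring
    rw [this, hP2]; abel
  have q3 : (1 - P) * P = 0 := by
    have : (1 - P) * P = P - P * P := by noncomm_ring
    rw [this, hP2]; abel
  rw [mul_add, add_mul, add_mul, mul_smul_comm, mul_smul_comm, smul_mul_assoc, smul_mul_assoc,
    smul_smul, q1, q2, q3, hP2, inv_mul_cancel₀ hz, one_smul, smul_zero, smul_zero]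
  abel

theorem aux_factorization : ∀ (d m g : ℕ), 0 < g → ∀ A : ℤ → Matrix (Fin m) (Fin m) ℂ,
    (∀ k : ℤ, (k < 0 ∨ (g : ℤ) ≤ k) → A k = 0) →
    (∀ z : ℂ, z ≠ 0 → mEval A z * mAdjEval A z = 1) →
    ∀ c : ℂ, ‖c‖ = 1 →
    (∀ z : ℂ, z ≠ 0 → (mEval A z).det = c * z ^ d) →
    ∃ v : Fin d → (Fin m → ℂ),
      (∀ j, star (v j) ⬝ᵥ v j = 1) ∧
      ∃ U ∈ Matrix.unitaryGroup (Fin m) ℂ,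
        ∀ z : ℂ, z ≠ 0 →
          mEval A z = (List.ofFn fun j => primitiveMF (v j) z).prod * U := by
  intro d
  induction d with
  | zero =>
    intro m g hg A hsupp hpara c hc hdet
    set G : ℤ := (g : ℤ) - 1 with hGdef
    have hGg : (g : ℤ) = G + 1 := by omega
    have hG : 0 ≤ G := by omega
    have hsupp' : ∀ k : ℤ, k ∉ Finset.Icc (0:ℤ) G → A k = 0 := by
      intro k hk
      rw [Finset.mem_Icc] at hk
      exact hsupp k (by omega)
    have hdet0 : (A 0).det = c := by
      have := eval_at_zero A hG hsupp' hdet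
      simpa using this
    have hc0 : c ≠ 0 := by
      intro h
      rw [h] at hc
      simp at hc
    have hA0H : IsUnit ((A 0)ᴴ).det := by
      rw [Matrix.det_conjTranspose, hdet0]
      exact (star_ne_zero.mpr hc0).isUnit
    have Cids := coeff_ids A hG hsupp' hpara
    have vanish : ∀ N : ℕ, ∀ k : ℤ, G + 1 - k ≤ N → 1 ≤ k → A k = 0 := by
      intro N
      induction N with
      | zero =>
        intro k h1 h2
        exact hsupp k (by omega)
      | succ M ihM =>
        intro k h1 h2
        by_cases hk : (g : ℤ) ≤ k
        · exact hsupp k (Or.inr hk)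
        · push_neg at hk
          have hCk := Cids k (Finset.mem_Icc.mpr ⟨by omega, by omega⟩) (by omega)
          have hsingle : ∑ l ∈ Finset.Icc (0:ℤ) G, A (l + k) * (A l)ᴴ = A k * (A 0)ᴴ := by
            rw [Finset.sum_eq_single_of_mem 0 (Finset.mem_Icc.mpr ⟨le_refl 0, hG⟩)]
            · rw [zero_add]
            · intro l hl hl0
              have hbounds := Finset.mem_Icc.mp hl
              have : A (l + k) = 0 := ihM (l + k) (by omega) (by omega)
              rw [this, Matrix.zero_mul]
          rw [hsingle] at hCk
          have h3 := congrArg (fun M => M * ((A 0)ᴴ)⁻¹) hCk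
          simpa [Matrix.mul_assoc, Matrix.mul_nonsing_inv _ hA0H] using h3
    have hvan : ∀ k : ℤ, k ∈ Finset.Icc (0:ℤ) G → k ≠ 0 → A k = 0 := by
      intro k hk hk0
      have hb := Finset.mem_Icc.mp hk
      exact vanish (G + 1 - k).toNat k (by omega) (by omega)
    have mEA : ∀ z : ℂ, mEval A z = A 0 := by
      intro z
      rw [mEval_eq_sum A hsupp' z,
        Finset.sum_eq_single_of_mem 0 (Finset.mem_Icc.mpr ⟨le_refl 0, hG⟩)]
      · simp
      · intro k hk hk0
        rw [hvan k hk hk0, smul_zero]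
    have mAdjA : mAdjEval A 1 = (A 0)ᴴ := by
      rw [mAdjEval_eq_sum A hsupp' 1,
        Finset.sum_eq_single_of_mem 0 (Finset.mem_Icc.mpr ⟨le_refl 0, hG⟩)]
      · simp
      · intro k hk hk0
        rw [hvan k hk hk0, Matrix.conjTranspose_zero, smul_zero]
    have hU : A 0 * star (A 0) = 1 := by
      have := hpara 1 one_ne_zero
      rw [mEA 1, mAdjA] at this
      rwa [Matrix.star_eq_conjTranspose]
    refine ⟨fun j => Fin.elim0 j, fun j => Fin.elim0 j, A 0,
      Matrix.mem_unitaryGroup_iff.mpr hU, ?_⟩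
    intro z hz
    rw [mEA z]
    simp
  | succ n ih =>
    intro m g hg A hsupp hpara c hc hdet
    set G : ℤ := (g : ℤ) - 1 with hGdef
    have hGg : (g : ℤ) = G + 1 := by omega
    have hG : 0 ≤ G := by omega
    have hsupp' : ∀ k : ℤ, k ∉ Finset.Icc (0:ℤ) G → A k = 0 := by
      intro k hk
      rw [Finset.mem_Icc] at hk
      exact hsupp k (by omega)
    have hdet0 : (A 0).det = 0 := by
      have := eval_at_zero A hG hsupp' hdet
      simpa using this
    have hdetH : ((A 0)ᴴ).det = 0 := by
      rw [Matrix.det_conjTranspose, hdet0, star_zero]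
    obtain ⟨u, huu, hnull⟩ := exists_unit_nullvec ((A 0)ᴴ) hdetH
    set P : Matrix (Fin m) (Fin m) ℂ := vecMulVec u (star u) with hP
    have hP2 : P * P = P := proj_idem huu
    have hPH : Pᴴ = P := proj_herm u
    have hPA0 : P * A 0 = 0 := proj_null hnull
    have hA0P : (A 0)ᴴ * P = 0 := by
      have h1 := congrArg Matrix.conjTranspose hPA0
      rwa [Matrix.conjTranspose_mul, hPH, Matrix.conjTranspose_zero] at h1
    set B : ℤ → Matrix (Fin m) (Fin m) ℂ := fun k => (1 - P) * A k + P * A (k + 1) with hB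
    have hsuppB : ∀ k : ℤ, (k < 0 ∨ (g : ℤ) ≤ k) → B k = 0 := by
      intro k hk
      have hBk : B k = (1 - P) * A k + P * A (k + 1) := rfl
      rcases hk with hk | hk
      · have h1 : A k = 0 := hsupp k (Or.inl hk)
        by_cases hk1 : k + 1 = 0
        · rw [hBk, h1, hk1, Matrix.mul_zero, hPA0, add_zero]
        · have h2 : A (k + 1) = 0 := hsupp (k + 1) (Or.inl (by omega))
          rw [hBk, h1, h2, Matrix.mul_zero, Matrix.mul_zero, add_zero]
      · have h1 : A k = 0 := hsupp k (Or.inr hk)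
        have h2 : A (k + 1) = 0 := hsupp (k + 1) (Or.inr (by omega))
        rw [hBk, h1, h2, Matrix.mul_zero, Matrix.mul_zero, add_zero]
    have hsuppB' : ∀ k : ℤ, k ∉ Finset.Icc (0:ℤ) G → B k = 0 := by
      intro k hk
      rw [Finset.mem_Icc] at hk
      exact hsuppB k (by omega)
    have shift1 : ∀ z : ℂ, ∑ k ∈ Finset.Icc (0:ℤ) G, z ^ (k+1) • (P * A (k + 1))
        = P * mEval A z := by
      intro z
      have e2 : ∑ k ∈ Finset.Icc (0:ℤ) G, z ^ (k+1) • (P * A (k + 1))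
          = ∑ j ∈ Finset.Icc (1:ℤ) (G+1), z ^ j • (P * A j) := by
        rw [show Finset.Icc (1:ℤ) (G+1) = (Finset.Icc (0:ℤ) G).map (addRightEmbedding 1) by
          rw [Finset.map_add_right_Icc]; norm_num]
        rw [Finset.sum_map]
        simp only [addRightEmbedding_apply]
      have ea : ∑ j ∈ Finset.Icc (1:ℤ) (G+1), z ^ j • (P * A j)
          = ∑ j ∈ Finset.Icc (0:ℤ) (G+1), z ^ j • (P * A j) := by
        refine Finset.sum_subset ?_ ?_
        · intro x hx; rw [Finset.mem_Icc] at *; omega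
        · intro x hx hx'
          rw [Finset.mem_Icc] at hx
          have : x = 0 := by
            by_contra hxx
            exact hx' (Finset.mem_Icc.mpr ⟨by omega, hx.2⟩)
          rw [this, hPA0, smul_zero]
      have eb : ∑ j ∈ Finset.Icc (0:ℤ) G, z ^ j • (P * A j)
          = ∑ j ∈ Finset.Icc (0:ℤ) (G+1), z ^ j • (P * A j) := by
        refine Finset.sum_subset ?_ ?_
        · intro x hx; rw [Finset.mem_Icc] at *; omega
        · intro x hx hx'
          rw [Finset.mem_Icc] at hx
          have : x = G + 1 := by
            by_contra hxx
            exact hx' (Finset.mem_Icc.mpr ⟨hx.1, by omega⟩)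
          rw [this]
          rw [hsupp' (G+1) (by rw [Finset.mem_Icc]; omega), Matrix.mul_zero, smul_zero]
      have ec : P * mEval A z = ∑ j ∈ Finset.Icc (0:ℤ) G, z ^ j • (P * A j) := by
        rw [mEval_eq_sum A hsupp' z, Finset.mul_sum]
        exact Finset.sum_congr rfl fun k _ => by rw [mul_smul_comm]
      rw [e2, ea, ec, eb]
    have key1 : ∀ z : ℂ, z ≠ 0 → mEval B z = (1 - P + z⁻¹ • P) * mEval A z := by
      intro z hz
      rw [mEval_eq_sum B hsuppB' z]
      have expand : ∀ k : ℤ, z ^ k • B k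
          = (1 - P) * (z ^ k • A k) + z⁻¹ • (z ^ (k+1) • (P * A (k + 1))) := by
        intro k
        have hBk : B k = (1 - P) * A k + P * A (k + 1) := rfl
        rw [hBk, smul_add, mul_smul_comm, smul_smul]
        congr 1
        have hzz : z⁻¹ * z ^ (k+1) = z ^ k := by
          rw [zpow_add₀ hz, zpow_one]
          field_simp
        rw [hzz]
      calc ∑ k ∈ Finset.Icc (0:ℤ) G, z ^ k • B k
          = ∑ k ∈ Finset.Icc (0:ℤ) G,
              ((1 - P) * (z ^ k • A k) + z⁻¹ • (z ^ (k+1) • (P * A (k + 1)))) :=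
            Finset.sum_congr rfl fun k _ => expand k
        _ = (1 - P) * (∑ k ∈ Finset.Icc (0:ℤ) G, z ^ k • A k)
              + z⁻¹ • (∑ k ∈ Finset.Icc (0:ℤ) G, z ^ (k+1) • (P * A (k + 1))) := by
            rw [Finset.sum_add_distrib, ← Finset.mul_sum, ← Finset.smul_sum]
        _ = (1 - P) * mEval A z + z⁻¹ • (P * mEval A z) := by
            rw [shift1 z, ← mEval_eq_sum A hsupp' z]
        _ = (1 - P + z⁻¹ • P) * mEval A z := by
            rw [add_mul, smul_mul_assoc]
    have shift2 : ∀ z : ℂ, ∑ k ∈ Finset.Icc (0:ℤ) G, z ^ (-(k+1)) • ((A (k + 1))ᴴ * P)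
        = mAdjEval A z * P := by
      intro z
      have e2 : ∑ k ∈ Finset.Icc (0:ℤ) G, z ^ (-(k+1)) • ((A (k + 1))ᴴ * P)
          = ∑ j ∈ Finset.Icc (1:ℤ) (G+1), z ^ (-j) • ((A j)ᴴ * P) := by
        rw [show Finset.Icc (1:ℤ) (G+1) = (Finset.Icc (0:ℤ) G).map (addRightEmbedding 1) by
          rw [Finset.map_add_right_Icc]; norm_num]
        rw [Finset.sum_map]
        simp only [addRightEmbedding_apply]
      have ea : ∑ j ∈ Finset.Icc (1:ℤ) (G+1), z ^ (-j) • ((A j)ᴴ * P)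
          = ∑ j ∈ Finset.Icc (0:ℤ) (G+1), z ^ (-j) • ((A j)ᴴ * P) := by
        refine Finset.sum_subset ?_ ?_
        · intro x hx; rw [Finset.mem_Icc] at *; omega
        · intro x hx hx'
          rw [Finset.mem_Icc] at hx
          have : x = 0 := by
            by_contra hxx
            exact hx' (Finset.mem_Icc.mpr ⟨by omega, hx.2⟩)
          rw [this, hA0P, smul_zero]
      have eb : ∑ j ∈ Finset.Icc (0:ℤ) G, z ^ (-j) • ((A j)ᴴ * P)
          = ∑ j ∈ Finset.Icc (0:ℤ) (G+1), z ^ (-j) • ((A j)ᴴ * P) := by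
        refine Finset.sum_subset ?_ ?_
        · intro x hx; rw [Finset.mem_Icc] at *; omega
        · intro x hx hx'
          rw [Finset.mem_Icc] at hx
          have : x = G + 1 := by
            by_contra hxx
            exact hx' (Finset.mem_Icc.mpr ⟨hx.1, by omega⟩)
          rw [this]
          rw [hsupp' (G+1) (by rw [Finset.mem_Icc]; omega), Matrix.conjTranspose_zero,
            Matrix.zero_mul, smul_zero]
      have ec : mAdjEval A z * P = ∑ j ∈ Finset.Icc (0:ℤ) G, z ^ (-j) • ((A j)ᴴ * P) := by
        rw [mAdjEval_eq_sum A hsupp' z, Finset.sum_mul]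
        exact Finset.sum_congr rfl fun k _ => by rw [smul_mul_assoc]
      rw [e2, ea, ec, eb]
    have key2 : ∀ z : ℂ, z ≠ 0 → mAdjEval B z = mAdjEval A z * (1 - P + z • P) := by
      intro z hz
      rw [mAdjEval_eq_sum B hsuppB' z]
      have expand : ∀ k : ℤ, z ^ (-k) • (B k)ᴴ
          = (z ^ (-k) • (A k)ᴴ) * (1 - P) + z • (z ^ (-(k+1)) • ((A (k + 1))ᴴ * P)) := by
        intro k
        have hBk : B k = (1 - P) * A k + P * A (k + 1) := rfl
        have hBkH : (B k)ᴴ = (A k)ᴴ * (1 - P) + (A (k + 1))ᴴ * P := by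
          rw [hBk, Matrix.conjTranspose_add, Matrix.conjTranspose_mul, Matrix.conjTranspose_mul,
            hPH, Matrix.conjTranspose_sub, Matrix.conjTranspose_one, hPH]
        rw [hBkH, smul_add, smul_mul_assoc, smul_smul]
        congr 1
        have hzz : z * z ^ (-(k+1)) = z ^ (-k) := by
          rw [show -(k+1) = -k + -1 by ring, zpow_add₀ hz, _root_.zpow_neg_one,
            mul_comm (z ^ (-k)) z⁻¹, ← mul_assoc, mul_inv_cancel₀ hz, one_mul]
        rw [hzz]
      calc ∑ k ∈ Finset.Icc (0:ℤ) G, z ^ (-k) • (B k)ᴴ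
          = ∑ k ∈ Finset.Icc (0:ℤ) G,
              ((z ^ (-k) • (A k)ᴴ) * (1 - P) + z • (z ^ (-(k+1)) • ((A (k + 1))ᴴ * P))) :=
            Finset.sum_congr rfl fun k _ => expand k
        _ = (∑ k ∈ Finset.Icc (0:ℤ) G, z ^ (-k) • (A k)ᴴ) * (1 - P)
              + z • (∑ k ∈ Finset.Icc (0:ℤ) G, z ^ (-(k+1)) • ((A (k + 1))ᴴ * P)) := by
            rw [Finset.sum_add_distrib, ← Finset.sum_mul, ← Finset.smul_sum]
        _ = mAdjEval A z * (1 - P) + z • (mAdjEval A z * P) := by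
            rw [shift2 z, ← mAdjEval_eq_sum A hsupp' z]
        _ = mAdjEval A z * (1 - P + z • P) := by
            rw [mul_add, mul_smul_comm]
    have hparaB : ∀ z : ℂ, z ≠ 0 → mEval B z * mAdjEval B z = 1 := by
      intro z hz
      rw [key1 z hz, key2 z hz, Matrix.mul_assoc, ← Matrix.mul_assoc (mEval A z),
        hpara z hz, Matrix.one_mul]
      have h1 := vw_mul hP2 (inv_ne_zero hz)
      rwa [inv_inv] at h1
    have hdetB : ∀ z : ℂ, z ≠ 0 → (mEval B z).det = c * z ^ n := by
      intro z hz
      rw [key1 z hz, Matrix.det_mul, hdet z hz]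
      have hW : (1 : Matrix (Fin m) (Fin m) ℂ) - P + z⁻¹ • P = 1 + (z⁻¹ - 1) • P := by
        rw [sub_smul, one_smul]
        abel
      rw [hW, det_one_add_smul_proj huu]
      have : (1 : ℂ) + (z⁻¹ - 1) = z⁻¹ := by ring
      rw [this, pow_succ]
      field_simp
    obtain ⟨w, hw, U, hUmem, hfact⟩ := ih m g hg B hsuppB hparaB c hc hdetB
    refine ⟨Fin.cons u w, ?_, U, hUmem, ?_⟩
    · intro j
      refine Fin.cases ?_ ?_ j
      · simpa [Fin.cons_zero] using huu
      · intro i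
        simpa [Fin.cons_succ] using hw i
    · intro z hz
      have hVW : primitiveMF u z * (1 - P + z⁻¹ • P) = 1 := vw_mul hP2 hz
      have hVB : mEval A z = primitiveMF u z * mEval B z := by
        rw [key1 z hz, ← Matrix.mul_assoc, hVW, Matrix.one_mul]
      rw [hVB, hfact z hz, ← Matrix.mul_assoc]
      congr 1
      rw [List.ofFn_succ, List.prod_cons]
      simp [Fin.cons_zero, Fin.cons_succ]

/-- Paraunitary matrix factorization: every paraunitary polynomial
matrix-function `A(z) = ∑_{k=0}^{g-1} Aₖ zᵏ` of degree `d` with `A_{g-1} ≠ 0`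
factors as `A(z) = V₁(z)···V_d(z)·U` with primitive paraunitary factors `Vⱼ`
and a constant unitary matrix `U`. -/
theorem paraunitary_factorization {m g : ℕ} (hg : 0 < g)
    (A : ℤ → Matrix (Fin m) (Fin m) ℂ)
    (hsupp : ∀ k : ℤ, (k < 0 ∨ (g : ℤ) ≤ k) → A k = 0)
    (htop : A ((g : ℤ) - 1) ≠ 0)
    (hpara : ∀ z : ℂ, z ≠ 0 → mEval A z * mAdjEval A z = 1)
    (c : ℂ) (d : ℕ) (hc : ‖c‖ = 1)
    (hdet : ∀ z : ℂ, z ≠ 0 → (mEval A z).det = c * z ^ d) :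
    ∃ v : Fin d → (Fin m → ℂ),
      (∀ j, star (v j) ⬝ᵥ v j = 1) ∧
      ∃ U ∈ Matrix.unitaryGroup (Fin m) ℂ,
        ∀ z : ℂ, z ≠ 0 →
          mEval A z = (List.ofFn fun j => primitiveMF (v j) z).prod * U := by
  exact aux_factorization d m g hg A hsupp hpara c hc hdet
end

section
/- Suppose U(z) and Ũ(z) are two m×m matrix-functions, both unitary on the unit circle with constant determinant, whose first m−1 rows have entries in L_g^+ and last row entries in L_g^+ conjugated (i.e., of form (13),(14)), and suppose there is a single F(z) of the lower-triangular unipotent form (identity except the last row (φ_1,...,φ_{m-1},1) with φ_j ∈ L_g^−) such that F(z)U(z) ∈ L_g^+ and F(z)Ũ(z) ∈ L_g^+ entrywise. Then Ũ(z) = U(z)·C for some constant unitary matrix C. -/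
/-!
Since `det F = 1`, `W = U⁻¹ Ũ = (F U)⁻¹ (F Ũ)`, and by the adjugate formula the inverse of a
polynomial matrix of constant determinant is polynomial; hence `W`, and symmetrically
`W⁻¹ = Ũ⁻¹ U`, have polynomial entries. On the unit circle `U` and `Ũ` are unitary, so there
`W⁻¹ = Wᴴ`: every entry `p` of `W` is a polynomial whose conjugate `∑ conj aₖ z⁻ᵏ` on the circle is
again a polynomial. This forces `p` to be constant, so `W ≡ W(1)`, a unitary matrix.
-/

open Matrix Finset

/-- The unipotent matrix-function which is the identity except that its last row
is `(φ₁, …, φ_{m−1}, 1)`. -/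
noncomputable def unipLast {m : ℕ} (φ : Fin m → ℂ → ℂ) (z : ℂ) :
    Matrix (Fin m) (Fin m) ℂ :=
  Matrix.of fun i j : Fin m =>
    if (i : ℕ) = m - 1 then (if (j : ℕ) = m - 1 then 1 else φ j z)
    else (if i = j then 1 else 0)

/-- `U` has the row structure (13),(14): entries of the first `m−1` rows in `L_g⁺`,
entries of the last row conjugates of `L_g⁺` functions, i.e. in `L_g⁻`. -/
def RowStructure {m : ℕ} (g : ℕ) (U : ℂ → Matrix (Fin m) (Fin m) ℂ) : Prop :=
  (∀ i j : Fin m, (i : ℕ) < m - 1 → ∃ co : ℕ → ℂ, ∀ z : ℂ, z ≠ 0 →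
      U z i j = ∑ k ∈ Finset.range (g + 1), co k * z ^ k) ∧
  (∀ i j : Fin m, (i : ℕ) = m - 1 → ∃ co : ℕ → ℂ, ∀ z : ℂ, z ≠ 0 →
      U z i j = ∑ k ∈ Finset.range (g + 1), (starRingEnd ℂ) (co k) * z ^ (-(k : ℤ)))

open Polynomial

section EntriesIn

variable {α R n σ : Type*} [CommRing R] [Fintype n] [SetLike σ (α → R)]

def EntriesIn (S : σ) (V : α → Matrix n n R) : Prop :=
  ∀ i j, (fun a => V a i j) ∈ S

variable [SubringClass σ (α → R)] {S : σ} {V W : α → Matrix n n R}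

theorem EntriesIn.mul (hV : EntriesIn S V) (hW : EntriesIn S W) :
    EntriesIn S fun a => V a * W a := fun i j => by
  convert sum_mem (t := univ) fun k _ => mul_mem (hV i k) (hW k j) using 1
  funext a
  simp only [mul_apply, Finset.sum_apply, Pi.mul_apply]

theorem EntriesIn.adjugate [DecidableEq n] (hV : EntriesIn S V) :
    EntriesIn S fun a => (V a).adjugate := by
  let N : Matrix n n S := .of fun i j => ⟨_, hV i j⟩
  intro i j
  convert (N.adjugate i j).2 using 1
  funext a
  change (V a).adjugate i j = _
  rw [show V a = ((Pi.evalRingHom _ a).comp (SubringClass.subtype S)).mapMatrix N from rfl,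
    ← RingHom.map_adjugate]
  rfl

end EntriesIn

theorem Matrix.inv_mul_eq_conjTranspose_inv_mul {n α : Type*} [Fintype n] [DecidableEq n]
    [CommRing α] [StarRing α] {A B : Matrix n n α} (hA : A * Aᴴ = 1) (hB : B * Bᴴ = 1) :
    B⁻¹ * A = (A⁻¹ * B)ᴴ := by
  rw [inv_eq_right_inv hA, inv_eq_right_inv hB, conjTranspose_mul, conjTranspose_conjTranspose]

theorem det_unipLast {m : ℕ} (φ : Fin m → ℂ → ℂ) (z : ℂ) : (unipLast φ z).det = 1 := by
  rw [det_of_isLowerTriangular]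
  · exact prod_eq_one fun i _ => by simp +contextual [unipLast]
  · intro i j (hij : i < j)
    have : (i : ℕ) ≠ m - 1 := by omega
    simp [unipLast, this, hij.ne]

theorem Complex.infinite_setOf_norm_eq_one : {z : ℂ | ‖z‖ = 1}.Infinite := by
  have hsphere : (Metric.sphere (0 : ℂ) 1).Infinite :=
    (isPreconnected_sphere (by simp) 0 1).infinite_of_nontrivial
      ⟨1, by simp, -1, by simp, by norm_num⟩
  exact hsphere.mono fun z hz => by simpa using hz

theorem Polynomial.natDegree_eq_zero_of_eval_eq_conj_on_circle {p q : ℂ[X]}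
    (h : ∀ z : ℂ, ‖z‖ = 1 → q.eval z = starRingEnd ℂ (p.eval z)) : p.natDegree = 0 := by
  set n := p.natDegree
  -- on the circle `conj z = z⁻¹`, so `zⁿ q(z)` is the conjugate-reflected polynomial of `p`
  have hreflect : X ^ n * q = reflect n (p.map (starRingEnd ℂ)) := by
    refine eq_of_infinite_eval_eq _ _
      (Complex.infinite_setOf_norm_eq_one.mono fun z (hz : ‖z‖ = 1) => ?_)
    have hzz : z * starRingEnd ℂ z = 1 := by
      rw [Complex.mul_conj, Complex.normSq_eq_norm_sq, hz]; norm_num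
    let _ : Invertible (starRingEnd ℂ z) := ⟨z, hzz, by rw [mul_comm, hzz]⟩
    have hrefl := eval₂_reflect_mul_pow (RingHom.id ℂ) (starRingEnd ℂ z) n _
      (natDegree_map_le (f := starRingEnd ℂ) (p := p))
    rw [eval₂_id, eval₂_id, eval_map_apply, ← h z hz] at hrefl
    change eval z _ * _ = _ at hrefl
    change eval z _ = eval z _
    rw [eval_mul, eval_pow, eval_X, ← hrefl, mul_comm, mul_assoc, ← mul_pow, mul_comm _ z, hzz,
      one_pow, mul_one]
  by_contra hn
  have h0 := congrArg (coeff · 0) hreflect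
  simp only [coeff_X_pow_mul', coeff_reflect, revAt_le (Nat.zero_le n), Nat.sub_zero,
    coeff_map] at h0
  rw [if_neg (by omega), eq_comm, map_eq_zero] at h0
  exact hn (by simp [n, leadingCoeff_eq_zero.mp h0])

/-- `⋃ g, L_g⁺` as functions on `ℂ \ {0}`: the value at `0` is unconstrained. -/
def polynomialFunctionsOffZero : Subalgebra ℂ (ℂ → ℂ) where
  carrier := {f | ∃ p : ℂ[X], ∀ z ≠ 0, f z = p.eval z}
  mul_mem' := by
    rintro f g ⟨p, hp⟩ ⟨q, hq⟩
    exact ⟨p * q, fun z hz => by simp [hp z hz, hq z hz]⟩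
  add_mem' := by
    rintro f g ⟨p, hp⟩ ⟨q, hq⟩
    exact ⟨p + q, fun z hz => by simp [hp z hz, hq z hz]⟩
  algebraMap_mem' c := ⟨C c, fun _ _ => by simp⟩

namespace polynomialFunctionsOffZero

theorem mem_of_eq_off_zero {f g : ℂ → ℂ} (hf : f ∈ polynomialFunctionsOffZero)
    (h : ∀ z ≠ 0, g z = f z) : g ∈ polynomialFunctionsOffZero := by
  obtain ⟨p, hp⟩ := hf
  exact ⟨p, fun z hz => (h z hz).trans (hp z hz)⟩

theorem mem_of_eq_sum {f : ℂ → ℂ} {co : ℕ → ℂ} {N : ℕ}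
    (h : ∀ z ≠ 0, f z = ∑ k ∈ range N, co k * z ^ k) : f ∈ polynomialFunctionsOffZero :=
  ⟨∑ k ∈ range N, C (co k) * X ^ k, fun z hz => by simp [h z hz, eval_finsetSum]⟩

theorem entriesIn_of_eq_sum {n : Type*} {V : ℂ → Matrix n n ℂ} {N : ℕ}
    (h : ∀ i j, ∃ co : ℕ → ℂ, ∀ z ≠ 0, V z i j = ∑ k ∈ range N, co k * z ^ k) :
    EntriesIn polynomialFunctionsOffZero V := fun i j => by
  obtain ⟨co, hco⟩ := h i j
  exact mem_of_eq_sum hco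

theorem exists_const_of_conj {f g : ℂ → ℂ}
    (hf : f ∈ polynomialFunctionsOffZero) (hg : g ∈ polynomialFunctionsOffZero)
    (h : ∀ z : ℂ, ‖z‖ = 1 → g z = starRingEnd ℂ (f z)) : ∃ c, ∀ z ≠ 0, f z = c := by
  obtain ⟨p, hp⟩ := hf
  obtain ⟨q, hq⟩ := hg
  have hconj (z : ℂ) (hz : ‖z‖ = 1) : q.eval z = starRingEnd ℂ (p.eval z) := by
    have hz0 : z ≠ 0 := by rintro rfl; simp at hz
    rw [← hp z hz0, ← hq z hz0, h z hz]
  refine ⟨p.coeff 0, fun z hz => ?_⟩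
  rw [hp z hz, eq_C_of_natDegree_eq_zero (natDegree_eq_zero_of_eval_eq_conj_on_circle hconj),
    eval_C, coeff_C_zero]

end polynomialFunctionsOffZero

namespace EntriesIn

variable {n : Type*}

theorem inv_mul_of_det_eq [Fintype n] [DecidableEq n] {V W : ℂ → Matrix n n ℂ} {d : ℂ}
    (hV : EntriesIn polynomialFunctionsOffZero V)
    (hW : EntriesIn polynomialFunctionsOffZero W) (hdet : ∀ z ≠ 0, (V z).det = d) :
    EntriesIn polynomialFunctionsOffZero fun z => (V z)⁻¹ * W z := fun i j => by
  refine polynomialFunctionsOffZero.mem_of_eq_off_zero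
    (f := fun z => Ring.inverse d * ((V z).adjugate * W z) i j)
    (Subalgebra.mul_mem _ (Subalgebra.algebraMap_mem _ _) (hV.adjugate.mul hW i j))
    fun z hz => ?_
  simp only [Matrix.inv_def, hdet z hz, Matrix.smul_mul, Matrix.smul_apply, smul_eq_mul]

theorem inv_mul_of_det_mul_eq_one [Fintype n] [DecidableEq n]
    {F A B : ℂ → Matrix n n ℂ} {d : ℂ} (hF : ∀ z, (F z).det = 1)
    (hA : EntriesIn polynomialFunctionsOffZero fun z => F z * A z)
    (hB : EntriesIn polynomialFunctionsOffZero fun z => F z * B z)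
    (hdet : ∀ z ≠ 0, (A z).det = d) :
    EntriesIn polynomialFunctionsOffZero fun z => (A z)⁻¹ * B z := by
  convert hA.inv_mul_of_det_eq hB fun z hz => by rw [det_mul, hF, one_mul, hdet z hz] using 2
  rw [Matrix.mul_inv_rev, Matrix.mul_assoc, nonsing_inv_mul_cancel_left _ _ (by simp [hF])]

theorem eq_of_conjTranspose_on_circle {W W' : ℂ → Matrix n n ℂ}
    (hW : EntriesIn polynomialFunctionsOffZero W) (hW' : EntriesIn polynomialFunctionsOffZero W')
    (h : ∀ z : ℂ, ‖z‖ = 1 → W' z = (W z)ᴴ) (z : ℂ) (hz : z ≠ 0) : W z = W 1 := by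
  ext i j
  obtain ⟨a, ha⟩ := polynomialFunctionsOffZero.exists_const_of_conj (hW i j) (hW' j i)
    fun z hz => by simp [h z hz]
  exact (ha z hz).trans (ha 1 one_ne_zero).symm

end EntriesIn

theorem unique_up_to_constant_unitary_general {m g : ℕ}
    (U Ut : ℂ → Matrix (Fin m) (Fin m) ℂ)
    (hUcirc : ∀ z : ℂ, ‖z‖ = 1 → U z * (U z)ᴴ = 1)
    (hUtcirc : ∀ z : ℂ, ‖z‖ = 1 → Ut z * (Ut z)ᴴ = 1)
    (hUdet : ∃ c : ℂ, ∀ z : ℂ, z ≠ 0 → (U z).det = c)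
    (hUtdet : ∃ c : ℂ, ∀ z : ℂ, z ≠ 0 → (Ut z).det = c)
    (φ : Fin m → ℂ → ℂ)
    (hFU : ∀ i j : Fin m, ∃ co : ℕ → ℂ, ∀ z : ℂ, z ≠ 0 →
      (unipLast φ z * U z) i j = ∑ k ∈ Finset.range (g + 1), co k * z ^ k)
    (hFUt : ∀ i j : Fin m, ∃ co : ℕ → ℂ, ∀ z : ℂ, z ≠ 0 →
      (unipLast φ z * Ut z) i j = ∑ k ∈ Finset.range (g + 1), co k * z ^ k) :
    ∃ C ∈ Matrix.unitaryGroup (Fin m) ℂ, ∀ z : ℂ, z ≠ 0 → Ut z = U z * C := by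
  obtain ⟨c, hc⟩ := hUdet
  obtain ⟨c', hc'⟩ := hUtdet
  have h1 : ‖(1 : ℂ)‖ = 1 := norm_one
  have hV := polynomialFunctionsOffZero.entriesIn_of_eq_sum hFU
  have hVt := polynomialFunctionsOffZero.entriesIn_of_eq_sum hFUt
  have hW := hV.inv_mul_of_det_mul_eq_one (det_unipLast φ) hVt hc
  have hW' := hVt.inv_mul_of_det_mul_eq_one (det_unipLast φ) hV hc'
  have hconst := hW.eq_of_conjTranspose_on_circle hW'
    fun z hz => inv_mul_eq_conjTranspose_inv_mul (hUcirc z hz) (hUtcirc z hz)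
  refine ⟨(U 1)⁻¹ * Ut 1, ?_, fun z hz => ?_⟩
  · rw [inv_eq_right_inv (hUcirc 1 h1), ← star_eq_conjTranspose]
    exact mul_mem (Unitary.star_mem (mem_unitaryGroup_iff.mpr (hUcirc 1 h1)))
      (mem_unitaryGroup_iff.mpr (hUtcirc 1 h1))
  · have hUz : IsUnit (U z).det := by
      rw [hc z hz, ← hc 1 one_ne_zero]
      exact isUnit_det_of_right_inverse (hUcirc 1 h1)
    rw [← hconst z hz, mul_nonsing_inv_cancel_left _ _ hUz]

/-- If two matrix-functions `U`, `Ũ`, unitary on the unit circle, with constant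
determinant and row structure (13),(14), are sent into `L_g⁺` by the same unipotent
factor `F`, then `Ũ(z) = U(z)·C` for a constant unitary matrix `C`. -/
theorem unique_up_to_constant_unitary {m g : ℕ} (hm : 0 < m)
    (U Ut : ℂ → Matrix (Fin m) (Fin m) ℂ)
    (hUcirc : ∀ z : ℂ, ‖z‖ = 1 → U z * (U z)ᴴ = 1)
    (hUtcirc : ∀ z : ℂ, ‖z‖ = 1 → Ut z * (Ut z)ᴴ = 1)
    (hUdet : ∃ c : ℂ, ∀ z : ℂ, z ≠ 0 → (U z).det = c)
    (hUtdet : ∃ c : ℂ, ∀ z : ℂ, z ≠ 0 → (Ut z).det = c)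
    (hUrows : RowStructure g U) (hUtrows : RowStructure g Ut)
    (φ : Fin m → ℂ → ℂ)
    (hφ : ∀ j : Fin m, (j : ℕ) < m - 1 → ∃ co : ℕ → ℂ, ∀ z : ℂ, z ≠ 0 →
      φ j z = ∑ k ∈ Finset.range (g + 1), co k * z ^ (-(k : ℤ)))
    (hFU : ∀ i j : Fin m, ∃ co : ℕ → ℂ, ∀ z : ℂ, z ≠ 0 →
      (unipLast φ z * U z) i j = ∑ k ∈ Finset.range (g + 1), co k * z ^ k)
    (hFUt : ∀ i j : Fin m, ∃ co : ℕ → ℂ, ∀ z : ℂ, z ≠ 0 →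
      (unipLast φ z * Ut z) i j = ∑ k ∈ Finset.range (g + 1), co k * z ^ k) :
    ∃ C ∈ Matrix.unitaryGroup (Fin m) ℂ, ∀ z : ℂ, z ≠ 0 → Ut z = U z * C :=
  unique_up_to_constant_unitary_general U Ut hUcirc hUtcirc hUdet hUtdet φ hFU hFUt
end
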